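/- Let ℓ be a prime, m ∈ ℕ ∪ {∞} and M ≥ M_1(m), and let K be a field. Let σ' ∈ 𝔤^M(K) be a valuative element and τ' ∈ 𝔤^M(K) an element such that (σ',τ') is a C-pair. Then σ := σ'_m is valuative, and τ := τ'_m lies in D_{v_σ}^m, where v_σ is the coarsest valuation v of K with σ ∈ I_v^m. -/

import Mathlib

open Polynomial

noncomputable section

/-- The coefficient ring `Λ_m`: `ℤ/ℓ^m` for finite `m`, and `ℤ_ℓ` for `m = ∞`. -/
def Lam (ℓ : ℕ) [Fact ℓ.Prime] : ℕ∞ → Type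
  | ⊤ => PadicInt ℓ
  | (m : ℕ) => ZMod (ℓ ^ m)

instance (ℓ : ℕ) [Fact ℓ.Prime] : (m : ℕ∞) → CommRing (Lam ℓ m)
  | ⊤ => inferInstanceAs (CommRing (PadicInt ℓ))
  | (m : ℕ) => inferInstanceAs (CommRing (ZMod (ℓ ^ m)))

/-- The canonical projection `Λ_m → Λ_n` (for `n ≤ m`; junk value `0` otherwise). -/
def LamProj (ℓ : ℕ) [Fact ℓ.Prime] : (m n : ℕ∞) → Lam ℓ m →+ Lam ℓ n
  | ⊤, ⊤ => AddMonoidHom.id _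
  | ⊤, (n : ℕ) => (PadicInt.toZModPow n).toAddMonoidHom
  | (m : ℕ), (n : ℕ) =>
      if h : ℓ ^ n ∣ ℓ ^ m then (ZMod.castHom h (ZMod (ℓ ^ n))).toAddMonoidHom else 0
  | (_ : ℕ), ⊤ => 0

/-- The `ℓ^m`-minimized Galois group `𝔤^m(K) = Hom(Kˣ, Λ_m)`. -/
abbrev gal (ℓ : ℕ) [Fact ℓ.Prime] (m : ℕ∞) (K : Type*) [Field K] : Type _ :=
  Additive Kˣ →+ Lam ℓ m

variable {ℓ : ℕ} [Fact ℓ.Prime] {K : Type*} [Field K]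

open scoped Classical

/-- Evaluation of `σ ∈ 𝔤^m(K)` at a unit of `K`. -/
def galu {m : ℕ∞} (σ : gal ℓ m K) (x : Kˣ) : Lam ℓ m :=
  σ (Additive.ofMul x)

/-- Evaluation of `σ ∈ 𝔤^m(K)` at an arbitrary element of `K` (junk value `0` at `0`). -/
def galApp {m : ℕ∞} (σ : gal ℓ m K) (x : K) : Lam ℓ m :=
  if hx : x ≠ 0 then galu σ (Units.mk0 x hx) else 0

/-- Scalar multiplication of `𝔤^m(K)` by `Λ_m`. -/
def galSmul {m : ℕ∞} (a : Lam ℓ m) (σ : gal ℓ m K) : gal ℓ m K :=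
  AddMonoidHom.mk' (fun x => a * σ x) (by intro x y; simp only [map_add, mul_add])

/-- The canonical map `𝔤^m(K) → 𝔤^n(K)`, `σ ↦ σ_n`. -/
def galProj (m n : ℕ∞) (σ : gal ℓ m K) : gal ℓ n K :=
  (LamProj ℓ m n).comp σ

/-- `(σ,τ)` is a C-pair: `σ(x)·τ(1−x) = σ(1−x)·τ(x)` for all `x ∈ K ∖ {0,1}`. -/
def IsCPair {m : ℕ∞} (σ τ : gal ℓ m K) : Prop :=
  ∀ x : K, x ≠ 0 → x ≠ 1 →
    galApp σ x * galApp τ (1 - x) = galApp σ (1 - x) * galApp τ x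

/-- A subset of `𝔤^m(K)` is a C-set if all pairs of its elements are C-pairs. -/
def IsCSet {m : ℕ∞} (S : Set (gal ℓ m K)) : Prop :=
  ∀ σ ∈ S, ∀ τ ∈ S, IsCPair σ τ

/-- `μ_{c·ℓ^m} ⊂ K`: the polynomial `X^{c·ℓ^m} − 1` splits completely in `K`
(for all finite exponents when `m = ∞`). -/
def MuIn (K : Type*) [Field K] (c ℓ : ℕ) : ℕ∞ → Prop
  | ⊤ => ∀ k : ℕ, Polynomial.Splits ((Polynomial.X ^ (c * ℓ ^ k) - 1 : Polynomial K).map (RingHom.id K))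
  | (N : ℕ) => Polynomial.Splits ((Polynomial.X ^ (c * ℓ ^ N) - 1 : Polynomial K).map (RingHom.id K))

/-- `M_r(n) = (r+1)·n − r`. -/
def Mfun (r : ℕ) : ℕ∞ → ℕ∞
  | ⊤ => ⊤
  | (n : ℕ) => (((r + 1) * n - r : ℕ) : ℕ∞)

/-- `N(n) = M_1((6·ℓ^{3n−2} − 7)·(n−1) + 3n − 2)`. -/
def Nfun (ℓ : ℕ) : ℕ∞ → ℕ∞
  | ⊤ => ⊤
  | (n : ℕ) => Mfun 1 (((6 * ℓ ^ (3 * n - 2) - 7) * (n - 1) + 3 * n - 2 : ℕ) : ℕ∞)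

/-- `R(n) = N(M_2(M_1(n)))`. -/
def Rfun (ℓ : ℕ) (n : ℕ∞) : ℕ∞ :=
  Nfun ℓ (Mfun 2 (Mfun 1 n))

/-- The minimized inertia group `I_v^m` of a valuation (valuation subring) of `K`:
homomorphisms vanishing on the `v`-units. -/
def inertia (ℓ : ℕ) [Fact ℓ.Prime] (m : ℕ∞) (A : ValuationSubring K) : Set (gal ℓ m K) :=
  {σ | ∀ x : Kˣ, A.valuation (x : K) = 1 → galu σ x = 0}

/-- The minimized decomposition group `D_v^m` of a valuation (valuation subring) of `K`:
homomorphisms vanishing on the principal `v`-units `1 + 𝔪_v`. -/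
def decomp (ℓ : ℕ) [Fact ℓ.Prime] (m : ℕ∞) (A : ValuationSubring K) : Set (gal ℓ m K) :=
  {σ | ∀ x : Kˣ, A.valuation ((x : K) - 1) < 1 → galu σ x = 0}

/-- A subgroup of (the units of) a linearly ordered group-with-zero is convex. -/
def IsConvexSub {Γ : Type*} [LinearOrderedCommGroupWithZero Γ] (C : Subgroup Γˣ) : Prop :=
  ∀ γ c : Γˣ, (1 : Γ) ≤ (γ : Γ) → (γ : Γ) ≤ (c : Γ) → c ∈ C → γ ∈ C

/-- A subgroup is `ℓ`-divisible. -/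
def IsLDivisible {Γ : Type*} [LinearOrderedCommGroupWithZero Γ] (ℓ : ℕ) (C : Subgroup Γˣ) :
    Prop :=
  ∀ c ∈ C, ∃ d ∈ C, d ^ ℓ = c

/-- Condition (V1): the value group `vK` contains no nontrivial `ℓ`-divisible convex
subgroups. -/
def NoLDivConvex (ℓ : ℕ) (A : ValuationSubring K) : Prop :=
  ∀ C : Subgroup (A.ValueGroup)ˣ, IsConvexSub C → IsLDivisible ℓ C → C = ⊥

/-- The residue field `Kv` of a valuation. -/
abbrev resField (A : ValuationSubring K) : Type _ := IsLocalRing.ResidueField A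

/-- `τ ∈ 𝔤^m(Kv)` is the element induced by `σ ∈ D_v^m` (i.e. `τ = σ_v`): for every
`v`-unit `x` one has `τ(x̄) = σ(x)`. -/
def Induces {m : ℕ∞} (A : ValuationSubring K) (σ : gal ℓ m K)
    (τ : gal ℓ m (resField A)) : Prop :=
  ∀ (x : Kˣ) (h : A.valuation (x : K) = 1),
    galApp τ (IsLocalRing.residue A ⟨(x : K), (A.valuation_le_one_iff (x : K)).mp h.le⟩) =
      galu σ x

/-- An `m`-visible valuation. -/
def IsVisibleVal (ℓ : ℕ) [Fact ℓ.Prime] (m : ℕ∞) (A : ValuationSubring K) : Prop :=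
  NoLDivConvex ℓ A ∧
  ¬ IsCSet (Set.univ : Set (gal ℓ m (resField A))) ∧
  ∀ B : ValuationSubring (resField A),
    decomp ℓ m B = Set.univ → inertia ℓ m B = {0}

/-- `Σ^⊥ = ∩_{σ ∈ Σ} ker σ ⊆ Kˣ`. -/
def orth {m : ℕ∞} (S : Set (gal ℓ m K)) : Set Kˣ :=
  {x | ∀ σ ∈ S, galu σ x = 0}

/-- `σ` is valuative: `σ ∈ I_v^m` for some valuation `v` of `K`. -/
def IsValuative {m : ℕ∞} (σ : gal ℓ m K) : Prop :=
  ∃ A : ValuationSubring K, σ ∈ inertia ℓ m A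

/-- `V = v_σ` is the coarsest valuation with `σ ∈ I_V^m`. -/
def IsVsigma {m : ℕ∞} (σ : gal ℓ m K) (V : ValuationSubring K) : Prop :=
  σ ∈ inertia ℓ m V ∧ ∀ W : ValuationSubring K, σ ∈ inertia ℓ m W → W ≤ V

/-- `V = v_Σ` is the coarsest valuation with `Σ ⊆ I_V^m`. -/
def IsVSet {m : ℕ∞} (S : Set (gal ℓ m K)) (V : ValuationSubring K) : Prop :=
  S ⊆ inertia ℓ m V ∧ ∀ W : ValuationSubring K, S ⊆ inertia ℓ m W → W ≤ V

/-- The set `D^m_n(Σ)`. -/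
def Dmn (n m : ℕ∞) (S : Set (gal ℓ n K)) : Set (gal ℓ n K) :=
  {τ | ∀ σ ∈ S, ∃ τ₁ τ₂ : gal ℓ n K, ∃ σ' τ' τ₁' τ₂' : gal ℓ m K,
    galProj m n σ' = σ ∧ galProj m n τ' = τ ∧ galProj m n τ₁' = τ₁ ∧ galProj m n τ₂' = τ₂ ∧
    ¬ IsCPair τ₁ τ₂ ∧ IsCPair σ' τ' ∧ IsCPair σ' τ₁' ∧ IsCPair σ' τ₂'}

/-- The set `I^m_n(Σ)`. -/
def Imn (n m : ℕ∞) (S : Set (gal ℓ n K)) : Set (gal ℓ n K) :=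
  {σ | σ ∈ S ∧ ∃ σ' : gal ℓ m K, galProj m n σ' = σ ∧
    ∀ τ ∈ S, ∃ τ' : gal ℓ m K, galProj m n τ' = τ ∧ IsCPair σ' τ'}

/-- `K` is a function field over `k`, i.e. a finitely generated field extension. -/
def IsFunctionField (k K : Type*) [Field k] [Field K] [Algebra k K] : Prop :=
  ∃ s : Finset K, IntermediateField.adjoin k (s : Set K) = ⊤

/-- `trdeg(K|k) = d`. -/
def HasTrdeg (k K : Type*) [Field k] [Field K] [Algebra k K] (d : ℕ) : Prop :=
  ∃ b : Fin d → K, IsTranscendenceBasis k b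


/-- The set `ℓ^n·𝔤^m(K)` (interpreted as the trivial subgroup when `n = ∞`). -/
def lPowSet (ℓ : ℕ) [Fact ℓ.Prime] (m : ℕ∞) (K : Type*) [Field K] : ℕ∞ → Set (gal ℓ m K)
  | ⊤ => {0}
  | (k : ℕ) => {x | ∃ σ : gal ℓ m K, x = galSmul ((ℓ : Lam ℓ m) ^ k) σ}

end

/-!
If `σ'` is inertial at `v` and `(σ', τ')` is a C-pair, then for every `v`-non-unit `a ≠ 0` we have
`σ'(1 - a) = 0`, hence `σ'(a) τ'(1 - a) = 0` in `Λ_M`. As `M ≥ 2m - 1`, such a product vanishes only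
if one factor vanishes modulo `ℓ^m`; so `σ(a) = 0` whenever `τ(1 - a) ≠ 0`.

Suppose `τ(x) ≠ 0` for a principal unit `x` of `v_σ` and put `b = 1 - x`. Then `σ` kills every `z`
with `v(b) ≤ v(z) ≤ 1`: either `τ(1 - z) ≠ 0`, or `c = z + b(1 - z)` has the same value as `z` and
`τ(1 - c) = τ(1 - z) + τ(1 - b) ≠ 0`. Dividing by powers of `b`, `σ` is inertial at the coarsening
`v[1/b]` of `v`, in which `b` is a unit; this contradicts `v_σ(b) < 1`.

The coarsest `v_σ` exists because the units of `B ⊔ C` are products of units of `B` and of `C`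
(the `C`-values of `B`-units form a convex subgroup), so the valuation subrings at which `σ` is
inertial form a directed family whose union is again one of them.
-/

theorem Nat.Prime.pow_dvd_of_pow_dvd_mul {p n N a b : ℕ} (hp : p.Prime) (hN : 2 * n - 1 ≤ N)
    (hab : p ^ N ∣ a * b) (hb : ¬ p ^ n ∣ b) : p ^ n ∣ a := by
  have hb0 : b ≠ 0 := by rintro rfl; exact hb (dvd_zero _)
  rcases eq_or_ne a 0 with rfl | ha0
  · exact dvd_zero _
  rw [hp.pow_dvd_iff_le_factorization (mul_ne_zero ha0 hb0), Nat.factorization_mul ha0 hb0,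
    Finsupp.add_apply] at hab
  rw [hp.pow_dvd_iff_le_factorization hb0] at hb
  rw [hp.pow_dvd_iff_le_factorization ha0]
  omega

theorem ZMod.castHom_eq_zero_of_mul_eq_zero {p n N : ℕ} (hp : p.Prime) (hN : 2 * n - 1 ≤ N)
    (hd : p ^ n ∣ p ^ N) {x y : ZMod (p ^ N)} (hxy : x * y = 0)
    (hy : ZMod.castHom hd (ZMod (p ^ n)) y ≠ 0) : ZMod.castHom hd (ZMod (p ^ n)) x = 0 := by
  have : NeZero (p ^ N) := ⟨pow_ne_zero _ hp.ne_zero⟩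
  rw [ZMod.castHom_apply, ZMod.cast_eq_val, Ne, ZMod.natCast_eq_zero_iff] at hy
  rw [ZMod.castHom_apply, ZMod.cast_eq_val, ZMod.natCast_eq_zero_iff]
  refine hp.pow_dvd_of_pow_dvd_mul hN (Nat.dvd_of_mod_eq_zero ?_) hy
  rw [← ZMod.val_mul, hxy, ZMod.val_zero]

theorem lamProj_eq_zero_of_mul_eq_zero {ℓ : ℕ} [Fact ℓ.Prime] {m M : ℕ∞} (hM : Mfun 1 m ≤ M)
    {x y : Lam ℓ M} (hxy : x * y = 0) (hy : LamProj ℓ M m y ≠ 0) : LamProj ℓ M m x = 0 := by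
  have hp : ℓ.Prime := Fact.out
  cases M with
  | top =>
    rcases (mul_eq_zero (M₀ := PadicInt ℓ)).mp hxy with rfl | rfl
    · exact map_zero _
    · exact absurd (map_zero _) hy
  | coe N =>
    cases m with
    | top => exact (hy rfl).elim
    | coe n =>
      have hN : 2 * n - 1 ≤ N := by exact_mod_cast (show ((2 * n - 1 : ℕ) : ℕ∞) ≤ N from hM)
      have hd : ℓ ^ n ∣ ℓ ^ N := pow_dvd_pow ℓ (by omega)
      have hproj : LamProj ℓ N n = (ZMod.castHom hd (ZMod (ℓ ^ n))).toAddMonoidHom :=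
        dif_pos hd
      rw [hproj] at hy ⊢
      exact ZMod.castHom_eq_zero_of_mul_eq_zero hp hN hd hxy hy

section GalKer

variable {ℓ : ℕ} [Fact ℓ.Prime] {K : Type*} [Field K] {m : ℕ∞}

noncomputable def galKer (σ : gal ℓ m K) : Subgroup Kˣ :=
  AddSubgroup.toSubgroup' σ.ker

theorem mem_galKer {σ : gal ℓ m K} {x : Kˣ} : x ∈ galKer σ ↔ galu σ x = 0 :=
  Iff.rfl

theorem mem_inertia_iff {σ : gal ℓ m K} {A : ValuationSubring K} :
    σ ∈ inertia ℓ m A ↔ A.unitGroup ≤ galKer σ :=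
  Iff.rfl

theorem galKer_le_galKer_galProj {M : ℕ∞} (σ : gal ℓ M K) : galKer σ ≤ galKer (galProj M m σ) :=
  fun _ hx => (congrArg (LamProj ℓ M m) (mem_galKer.mp hx)).trans (map_zero _)

theorem galApp_coe (σ : gal ℓ m K) (x : Kˣ) : galApp σ x = galu σ x := by
  rw [galApp, dif_pos x.ne_zero, Units.mk0_val]

theorem galApp_mul (σ : gal ℓ m K) {x y : K} (hx : x ≠ 0) (hy : y ≠ 0) :
    galApp σ (x * y) = galApp σ x + galApp σ y := by
  rw [← Units.val_mk0 hx, ← Units.val_mk0 hy, ← Units.val_mul, galApp_coe, galApp_coe, galApp_coe,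
    galu, galu, galu, ofMul_mul, map_add]

end GalKer

namespace ValuationSubring

variable {K : Type*} [Field K]

theorem mem_unitGroup_iff_mem_and_inv_mem (A : ValuationSubring K) (x : Kˣ) :
    x ∈ A.unitGroup ↔ (x : K) ∈ A ∧ (x : K)⁻¹ ∈ A := by
  have hx : 0 < A.valuation (x : K) := zero_lt_iff.mpr (A.valuation.ne_zero_iff.mpr x.ne_zero)
  rw [mem_unitGroup_iff, ← valuation_le_one_iff, ← valuation_le_one_iff, map_inv₀,
    inv_le_one₀ hx, le_antisymm_iff]

/-- The subring `C · B^×`, which turns out to be `B ⊔ C`. -/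
def mulUnitGroup (C B : ValuationSubring K) : Subring K where
  carrier := {z | ∃ b ∈ B.unitGroup, C.valuation z ≤ C.valuation (b : K)}
  zero_mem' := ⟨1, B.unitGroup.one_mem, by simp⟩
  one_mem' := ⟨1, B.unitGroup.one_mem, le_rfl⟩
  add_mem' := by
    rintro x y ⟨b₁, hb₁, hx⟩ ⟨b₂, hb₂, hy⟩
    rcases le_total (C.valuation (b₁ : K)) (C.valuation (b₂ : K)) with h | h
    · exact ⟨b₂, hb₂, (C.valuation.map_add x y).trans (max_le (hx.trans h) hy)⟩
    · exact ⟨b₁, hb₁, (C.valuation.map_add x y).trans (max_le hx (hy.trans h))⟩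
  mul_mem' := by
    rintro x y ⟨b₁, hb₁, hx⟩ ⟨b₂, hb₂, hy⟩
    exact ⟨b₁ * b₂, B.unitGroup.mul_mem hb₁ hb₂,
      by simpa only [map_mul, Units.val_mul] using mul_le_mul' hx hy⟩
  neg_mem' := by
    rintro x ⟨b, hb, hx⟩
    exact ⟨b, hb, by rwa [Valuation.map_neg]⟩

theorem mem_mulUnitGroup {B C : ValuationSubring K} {z : K} :
    z ∈ mulUnitGroup C B ↔ ∃ b ∈ B.unitGroup, C.valuation z ≤ C.valuation (b : K) :=
  Iff.rfl

theorem le_mulUnitGroup_left (B C : ValuationSubring K) : C.toSubring ≤ mulUnitGroup C B :=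
  fun z hz => mem_mulUnitGroup.mpr
    ⟨1, B.unitGroup.one_mem, by simpa using (C.valuation_le_one_iff z).mpr hz⟩

theorem le_mulUnitGroup_right (B C : ValuationSubring K) : B.toSubring ≤ mulUnitGroup C B := by
  intro z hz
  rcases (B.valuation_le_one_iff z).mpr hz |>.lt_or_eq with hz1 | hz1
  · -- `z = (1 + z) - 1` with `1 + z` a `B`-unit
    have hu : B.valuation (1 + z) = 1 := B.valuation.map_one_add_of_lt hz1
    have hu0 : 1 + z ≠ 0 := fun h => by simp [h] at hu
    have h1 : 1 + z ∈ mulUnitGroup C B := mem_mulUnitGroup.mpr ⟨Units.mk0 _ hu0, hu, le_rfl⟩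
    simpa using _root_.sub_mem h1 (le_mulUnitGroup_left B C (one_mem C))
  · have hz0 : z ≠ 0 := fun h => by simp [h] at hz1
    exact mem_mulUnitGroup.mpr ⟨Units.mk0 z hz0, hz1, le_rfl⟩

theorem mem_sup_iff {B C : ValuationSubring K} {z : K} :
    z ∈ B ⊔ C ↔ ∃ b ∈ B.unitGroup, C.valuation z ≤ C.valuation (b : K) := by
  constructor
  · intro hz
    have hle : B ⊔ C ≤ C.ofLE (mulUnitGroup C B) (le_mulUnitGroup_left B C) :=
      sup_le (le_mulUnitGroup_right B C) (le_mulUnitGroup_left B C)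
    exact mem_mulUnitGroup.mp (hle hz)
  · rintro ⟨b, hb, hzb⟩
    have hzb' : z / b ∈ C := by
      rwa [← valuation_le_one_iff, map_div₀, div_le_one₀ (zero_lt_iff.mpr
        (C.valuation.ne_zero_iff.mpr b.ne_zero))]
    have hbB : (b : K) ∈ B := ((mem_unitGroup_iff_mem_and_inv_mem B b).mp hb).1
    simpa [b.ne_zero] using
      MulMemClass.mul_mem (le_sup_right (a := B) hzb') (le_sup_left (b := C) hbB)

theorem exists_mem_unitGroup_valuation_eq {B C : ValuationSubring K} {b₀ z : Kˣ}
    (hb₀ : b₀ ∈ B.unitGroup) (h₀ : C.valuation (b₀ : K) ≤ C.valuation (z : K))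
    (hz : C.valuation (z : K) ≤ 1) :
    ∃ b ∈ B.unitGroup, C.valuation (b : K) = C.valuation (z : K) := by
  rw [mem_unitGroup_iff] at hb₀
  have of_val {x : K} (hB : B.valuation x = 1) (hC : C.valuation x = C.valuation (z : K)) :
      ∃ b ∈ B.unitGroup, C.valuation (b : K) = C.valuation (z : K) :=
    ⟨Units.mk0 x fun h => by simp [h] at hB, hB, hC⟩
  rcases h₀.eq_or_lt with h₀ | h₀
  · exact ⟨b₀, hb₀, h₀⟩
  rcases lt_trichotomy (B.valuation (z : K)) 1 with hB | hB | hB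
  · rw [← hb₀] at hB
    exact of_val (x := z + b₀) ((B.valuation.map_add_eq_of_lt_right hB).trans hb₀)
      (C.valuation.map_add_eq_of_lt_left h₀)
  · exact ⟨z, hB, rfl⟩
  rcases hz.eq_or_lt with hz | hz
  · exact of_val (map_one _) (by rw [hz, map_one])
  have hBz : B.valuation (z : K) ≠ 0 := B.valuation.ne_zero_iff.mpr z.ne_zero
  refine of_val (x := ((b₀ : K) + z) / (1 + z)) ?_ ?_
  · rw [map_div₀, B.valuation.map_add_eq_of_lt_right (by rwa [hb₀]),
      B.valuation.map_add_eq_of_lt_right (by rwa [map_one]), div_self hBz]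
  · rw [map_div₀, C.valuation.map_add_eq_of_lt_right h₀,
      C.valuation.map_add_eq_of_lt_left (by rwa [map_one]), map_one, div_one]

theorem unitGroup_sup (B C : ValuationSubring K) :
    (B ⊔ C).unitGroup = B.unitGroup ⊔ C.unitGroup := by
  refine le_antisymm ?_
    (sup_le (unitGroup_le_unitGroup.mpr le_sup_left) (unitGroup_le_unitGroup.mpr le_sup_right))
  have of_le_one {x : Kˣ} (hx : x ∈ (B ⊔ C).unitGroup) (hxC : C.valuation (x : K) ≤ 1) :
      x ∈ B.unitGroup ⊔ C.unitGroup := by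
    obtain ⟨b₁, hb₁, hxb₁⟩ := mem_sup_iff.mp ((mem_unitGroup_iff_mem_and_inv_mem _ x).mp hx).2
    obtain ⟨b, hb, hbx⟩ := exists_mem_unitGroup_valuation_eq (b₀ := b₁⁻¹) (z := x)
      (B.unitGroup.inv_mem hb₁)
      (by
        simp only [Units.val_inv_eq_inv_val, map_inv₀] at hxb₁ ⊢
        exact (inv_le_comm₀ (C.valuation.pos_iff.mpr x.ne_zero)
          (C.valuation.pos_iff.mpr b₁.ne_zero)).mp hxb₁) hxC
    have hxb : x * b⁻¹ ∈ C.unitGroup := by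
      rw [mem_unitGroup_iff, Units.val_mul, map_mul, Units.val_inv_eq_inv_val, map_inv₀, hbx,
        mul_inv_cancel₀ (C.valuation.ne_zero_iff.mpr x.ne_zero)]
    simpa using Subgroup.mul_mem_sup hb hxb
  intro x hx
  rcases le_total (C.valuation (x : K)) 1 with hxC | hxC
  · exact of_le_one hx hxC
  · have := of_le_one ((B ⊔ C).unitGroup.inv_mem hx) (by
      rw [Units.val_inv_eq_inv_val, map_inv₀]; exact inv_le_one_of_one_le₀ hxC)
    simpa using this

theorem unitGroup_sup_le {W₁ W₂ : ValuationSubring K} {H : Subgroup Kˣ} (h₁ : W₁.unitGroup ≤ H)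
    (h₂ : W₂.unitGroup ≤ H) : (W₁ ⊔ W₂).unitGroup ≤ H :=
  (unitGroup_sup W₁ W₂).le.trans (sup_le h₁ h₂)

/-- The valuation subrings with units in `H` are closed under `⊔` (`unitGroup_sup_le`), so their
union is again a valuation subring. -/
def coarsestUnitGroupLE (H : Subgroup Kˣ) (A : ValuationSubring K) (hA : A.unitGroup ≤ H) :
    ValuationSubring K where
  carrier := {x | ∃ W : ValuationSubring K, W.unitGroup ≤ H ∧ x ∈ W}
  zero_mem' := ⟨A, hA, A.zero_mem⟩
  one_mem' := ⟨A, hA, A.one_mem⟩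
  add_mem' := by
    rintro x y ⟨W₁, h₁, hx⟩ ⟨W₂, h₂, hy⟩
    exact ⟨W₁ ⊔ W₂, unitGroup_sup_le h₁ h₂,
      (W₁ ⊔ W₂).add_mem _ _ (le_sup_left (b := W₂) hx) (le_sup_right (a := W₁) hy)⟩
  mul_mem' := by
    rintro x y ⟨W₁, h₁, hx⟩ ⟨W₂, h₂, hy⟩
    exact ⟨W₁ ⊔ W₂, unitGroup_sup_le h₁ h₂,
      (W₁ ⊔ W₂).mul_mem _ _ (le_sup_left (b := W₂) hx) (le_sup_right (a := W₁) hy)⟩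
  neg_mem' := by
    rintro x ⟨W, hW, hx⟩
    exact ⟨W, hW, W.neg_mem _ hx⟩
  mem_or_inv_mem' x := (A.mem_or_inv_mem x).imp (⟨A, hA, ·⟩) (⟨A, hA, ·⟩)

theorem isGreatest_coarsestUnitGroupLE (H : Subgroup Kˣ) (A : ValuationSubring K)
    (hA : A.unitGroup ≤ H) :
    IsGreatest {W | W.unitGroup ≤ H} (coarsestUnitGroupLE H A hA) := by
  refine ⟨fun x hx => ?_, fun W hW x hx => ⟨W, hW, hx⟩⟩
  obtain ⟨⟨W₁, h₁, hx₁⟩, ⟨W₂, h₂, hx₂⟩⟩ := (mem_unitGroup_iff_mem_and_inv_mem _ x).mp hx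
  exact unitGroup_sup_le h₁ h₂
    ((mem_unitGroup_iff_mem_and_inv_mem _ x).mpr
      ⟨le_sup_left (b := W₂) hx₁, le_sup_right (a := W₁) hx₂⟩)

/-- The coarsening `A[1/b]` of `A` in which `b` becomes a unit. -/
def away (A : ValuationSubring K) (b : K) (hb : b ∈ A) : ValuationSubring K :=
  A.ofLE
    { carrier := {z | ∃ n : ℕ, z * b ^ n ∈ A}
      zero_mem' := ⟨0, by simp⟩
      one_mem' := ⟨0, by simp⟩
      add_mem' := by
        rintro x y ⟨n, hx⟩ ⟨k, hy⟩
        refine ⟨n + k, ?_⟩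
        convert A.add_mem _ _ (A.mul_mem _ _ hx (pow_mem hb k)) (A.mul_mem _ _ hy (pow_mem hb n))
          using 1
        ring
      mul_mem' := by
        rintro x y ⟨n, hx⟩ ⟨k, hy⟩
        exact ⟨n + k, by convert A.mul_mem _ _ hx hy using 1; ring⟩
      neg_mem' := by
        rintro x ⟨n, hx⟩
        exact ⟨n, by simpa using A.neg_mem _ hx⟩ }
    fun z hz => ⟨0, by simpa using hz⟩

theorem mem_away {A : ValuationSubring K} {b : K} {hb : b ∈ A} {z : K} :
    z ∈ A.away b hb ↔ ∃ n : ℕ, z * b ^ n ∈ A :=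
  Iff.rfl

theorem inv_mem_away (A : ValuationSubring K) {b : K} (hb : b ∈ A) : b⁻¹ ∈ A.away b hb := by
  refine mem_away.mpr ⟨1, ?_⟩
  rcases eq_or_ne b 0 with rfl | hb0
  · simp
  · simp [hb0]

theorem unitGroup_away_le {A : ValuationSubring K} {b : Kˣ} (hb : (b : K) ∈ A) {H : Subgroup Kˣ}
    (hH : ∀ z : Kˣ, (z : K) ∈ A → (b : K) / z ∈ A → z ∈ H) : (A.away b hb).unitGroup ≤ H := by
  have hbH : b ∈ H := hH b hb (by simp)
  have of_pow_div_mem (n : ℕ) : ∀ z : Kˣ, (z : K) ∈ A → (b : K) ^ n / z ∈ A → z ∈ H := by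
    induction n with
    | zero =>
      intro z hz hz'
      exact hH z hz (by simpa [div_eq_mul_inv] using A.mul_mem _ _ hb hz')
    | succ n ih =>
      intro z hz hz'
      rcases A.mem_or_inv_mem ((b : K) / z) with h | h
      · exact hH z hz h
      · have hzb : z * b⁻¹ ∈ H := ih _ (by simpa [div_eq_mul_inv] using h) (by
          convert hz' using 1
          simp only [Units.val_mul, Units.val_inv_eq_inv_val]
          field_simp
          ring)
        simpa using H.mul_mem hzb hbH
  intro z hz
  obtain ⟨⟨n, hn⟩, ⟨k, hk⟩⟩ := (mem_unitGroup_iff_mem_and_inv_mem _ z).mp hz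
  rcases A.mem_or_inv_mem (z : K) with h | h
  · exact of_pow_div_mem k z h (by simpa [div_eq_inv_mul] using hk)
  · simpa using H.inv_mem (of_pow_div_mem n z⁻¹ (by simpa using h)
      (by rwa [Units.val_inv_eq_inv_val, div_inv_eq_mul, mul_comm]))

end ValuationSubring

section CPair

variable {ℓ : ℕ} [Fact ℓ.Prime] {K : Type*} [Field K] {m M : ℕ∞} {A : ValuationSubring K}

theorem galProj_mem_inertia {σ' : gal ℓ M K} (hA : σ' ∈ inertia ℓ M A) :
    galProj M m σ' ∈ inertia ℓ m A :=
  (mem_inertia_iff.mp hA).trans (galKer_le_galKer_galProj σ')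

theorem exists_isVsigma {σ : gal ℓ m K} (hA : σ ∈ inertia ℓ m A) : ∃ V, IsVsigma σ V :=
  ⟨_, A.isGreatest_coarsestUnitGroupLE (galKer σ) hA⟩

variable {σ' τ' : gal ℓ M K}

theorem mem_galKer_galProj_of_isCPair (hM : Mfun 1 m ≤ M) (hA : σ' ∈ inertia ℓ M A)
    (hC : IsCPair σ' τ') {a : Kˣ} (ha : A.valuation (a : K) < 1)
    (hτ : LamProj ℓ M m (galApp τ' (1 - a)) ≠ 0) : a ∈ galKer (galProj M m σ') := by
  have h1a : A.valuation (1 - (a : K)) = 1 := A.valuation.map_one_sub_of_lt ha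
  have hσ1a : galApp σ' (1 - a) = 0 := by
    rw [← Units.val_mk0 (fun h => by simp [h] at h1a : 1 - (a : K) ≠ 0), galApp_coe]
    exact hA _ h1a
  have hprod := hC a a.ne_zero (fun h => by simp [h] at ha)
  rw [hσ1a, zero_mul, galApp_coe] at hprod
  exact lamProj_eq_zero_of_mul_eq_zero hM hprod hτ

theorem mem_galKer_galProj_of_div_mem (hM : Mfun 1 m ≤ M) (hA : σ' ∈ inertia ℓ M A)
    (hC : IsCPair σ' τ') {b : Kˣ} (hb : A.valuation (b : K) < 1)
    (hτb : LamProj ℓ M m (galApp τ' (1 - b)) ≠ 0) {z : Kˣ} (hz : (z : K) ∈ A)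
    (hbz : (b : K) / z ∈ A) : z ∈ galKer (galProj M m σ') := by
  have hAm : A.unitGroup ≤ galKer (galProj M m σ') := galProj_mem_inertia hA
  have of_lt_one (a : Kˣ) (ha : A.valuation (a : K) < 1)
      (hτ : LamProj ℓ M m (galApp τ' (1 - a)) ≠ 0) : a ∈ galKer (galProj M m σ') :=
    mem_galKer_galProj_of_isCPair hM hA hC ha hτ
  rcases ((A.valuation_le_one_iff _).mpr hz).eq_or_lt with hz1 | hz1
  · exact hAm hz1
  rcases ((A.valuation_le_one_iff _).mpr hbz).eq_or_lt with hbz1 | hbz1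
  · have hzb : z * b⁻¹ ∈ A.unitGroup := by
      rw [ValuationSubring.mem_unitGroup_iff, Units.val_mul, Units.val_inv_eq_inv_val,
        ← div_eq_mul_inv, ← inv_div, map_inv₀, hbz1, inv_one]
    simpa using (galKer _).mul_mem (hAm hzb) (of_lt_one b hb hτb)
  rcases ne_or_eq (LamProj ℓ M m (galApp τ' (1 - z))) 0 with hτz | hτz
  · exact of_lt_one z hz1 hτz
  -- `c = z u = z + b (1 - z)` has `v c = v z` and `1 - c = (1 - z) (1 - b)`.
  have hu : A.valuation (1 + b / z * (1 - z)) = 1 := A.valuation.map_one_add_of_lt (by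
    rwa [map_mul, A.valuation.map_one_sub_of_lt hz1, mul_one])
  set u : Kˣ := Units.mk0 _ (fun h => by simp [h] at hu : 1 + b / z * (1 - (z : K)) ≠ 0)
  have h1z : 1 - (z : K) ≠ 0 := sub_ne_zero.mpr fun h => by simp [← h] at hz1
  have h1b : 1 - (b : K) ≠ 0 := sub_ne_zero.mpr fun h => by simp [← h] at hb
  have hc : z * u ∈ galKer (galProj M m σ') := by
    refine of_lt_one _ (by rwa [Units.val_mul, map_mul, Units.val_mk0, hu, mul_one]) ?_
    have h1c : 1 - ((z * u : Kˣ) : K) = (1 - z) * (1 - b) := by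
      simp only [u, Units.val_mul, Units.val_mk0]
      field_simp
      ring
    rwa [h1c, galApp_mul _ h1z h1b, map_add, hτz, zero_add]
  simpa using (galKer _).mul_mem hc ((galKer _).inv_mem (hAm (show u ∈ A.unitGroup from hu)))

theorem galProj_mem_inertia_away (hM : Mfun 1 m ≤ M) (hA : σ' ∈ inertia ℓ M A)
    (hC : IsCPair σ' τ') {b : Kˣ} (hb : A.valuation (b : K) < 1)
    (hτb : LamProj ℓ M m (galApp τ' (1 - b)) ≠ 0) :
    galProj M m σ' ∈ inertia ℓ m (A.away b ((A.valuation_le_one_iff _).mp hb.le)) :=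
  ValuationSubring.unitGroup_away_le _ fun _ hz hbz =>
    mem_galKer_galProj_of_div_mem hM hA hC hb hτb hz hbz

theorem galProj_mem_decomp_of_isVsigma (hM : Mfun 1 m ≤ M) (hA : σ' ∈ inertia ℓ M A)
    (hC : IsCPair σ' τ') {V : ValuationSubring K} (hV : IsVsigma (galProj M m σ') V) :
    galProj M m τ' ∈ decomp ℓ m V := by
  intro x hx
  by_contra hτx
  have hx1 : (x : K) ≠ 1 := fun h => hτx (by rw [Units.val_eq_one.mp h]; exact (galKer _).one_mem)
  set b : Kˣ := Units.mk0 (1 - x) (sub_ne_zero.mpr hx1.symm)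
  have hbV : V.valuation (b : K) < 1 := by rwa [Units.val_mk0, Valuation.map_sub_swap]
  have hbA : A.valuation (b : K) < 1 :=
    ValuationSubring.nonunits_le_nonunits.mpr (hV.2 A (galProj_mem_inertia hA))
      (V.mem_nonunits_iff.mpr hbV)
  have hτb : LamProj ℓ M m (galApp τ' (1 - b)) ≠ 0 := by
    rwa [Units.val_mk0, sub_sub_cancel, galApp_coe]
  have hb_inv : (b : K)⁻¹ ∈ V :=
    hV.2 _ (galProj_mem_inertia_away hM hA hC hbA hτb) (A.inv_mem_away _)
  exact ((V.mem_nonunits_iff_or.mp (V.mem_nonunits_iff.mpr hbV)).resolve_left b.ne_zero) hb_inv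

end CPair

theorem stmt16_general (ℓ : ℕ) [Fact ℓ.Prime] (m M : ℕ∞) (hM : Mfun 1 m ≤ M)
    (K : Type*) [Field K] (σ' τ' : gal ℓ M K)
    (hσ' : IsValuative σ') (hC : IsCPair σ' τ') :
    IsValuative (galProj M m σ') ∧
    ∃ V : ValuationSubring K, IsVsigma (galProj M m σ') V ∧
      galProj M m τ' ∈ decomp ℓ m V := by
  obtain ⟨A, hA⟩ := hσ'
  obtain ⟨V, hV⟩ := exists_isVsigma (galProj_mem_inertia (m := m) hA)
  exact ⟨⟨A, galProj_mem_inertia hA⟩, V, hV, galProj_mem_decomp_of_isVsigma hM hA hC hV⟩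

/-- An element forming a C-pair with a valuative element projects into a
minimized decomposition group. -/
theorem stmt16 (ℓ : ℕ) [Fact ℓ.Prime] (m M : ℕ∞) (hm : 1 ≤ m) (hM : Mfun 1 m ≤ M)
    (K : Type*) [Field K] (σ' τ' : gal ℓ M K)
    (hσ' : IsValuative σ') (hC : IsCPair σ' τ') :
    IsValuative (galProj M m σ') ∧
    ∃ V : ValuationSubring K, IsVsigma (galProj M m σ') V ∧
      galProj M m τ' ∈ decomp ℓ m V :=
  stmt16_general ℓ m M hM K σ' τ' hσ' hC
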